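/- Let $S=S(U,\{G_j\},\epsilon)$ be a proper multi-cone and $J\in\hat{\mathcal{P}}(\mathbb{Z}_\ell)$. Then $\overline{S_J}=\overline S\cap Z_J$, and for any nonempty $J'\subseteq\{1,\dots,\ell\}$ with $Z_J\not\subseteq Z_{J'}$ one has $Z_{J'}\cap S_J=\emptyset$. -/

import Mathlib

/-!
Write `P = ⋃_{j ∈ J} I_j`. By laminarity each `Î_j` lies either inside `P` or off `P`, so the
conditions defining `S` split into conditions on the coordinates in `P`, conditions on the
coordinates off `P`, and the mixed conditions `‖z‖_{Î_β} < ε ‖z‖_{Î_j}` with `Î_β ⊆ P` and `Î_j`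
off `P`. For `w ∈ S`, every `u ∈ Z_J` near the point `w'` obtained by zeroing the `P`-coordinates
of `w` satisfies the conditions off `P`, and `u + t • (w on P)` lies in `S` for small `t > 0`:
the conditions in `P` are invariant under positive scaling and the mixed ones only get easier.
Hence `w' ∈ S_J`, and projecting a sequence of `S` converging to a point of `Z_J` shows
`closure S ∩ Z_J ⊆ closure S_J`.

If `Z_J ⊄ Z_{J'}`, pick `i₀ ∈ I_{j'} \ P` with `j' ∈ J'` and the smallest `I_j ∋ i₀`; then
`i₀ ∈ Î_j ⊆ I_{j'}`. A point of `Z_{J'} ∩ S_J` vanishes on `Î_j` and can be moved by `± c e_{i₀}`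
inside `closure S ⊆ closure G_j`, so that `c e_{i₀}` and `-c e_{i₀}` both lie in `closure G_j`,
contradicting properness.
-/

open Filter Topology Finset

section PartialNorm

variable {ι : Type*}

noncomputable def partialNorm (A : Finset ι) (z : ι → ℂ) : ℝ := √(∑ i ∈ A, ‖z i‖ ^ 2)

variable {A : Finset ι}

lemma partialNorm_dependsOn (A : Finset ι) : DependsOn (partialNorm A) A := fun z w h => by
  simp only [partialNorm, Finset.sum_congr rfl fun i hi => congrArg (‖·‖ ^ 2) (h i hi)]

lemma partialNorm_smul (A : Finset ι) (t : ℝ) (z : ι → ℂ) :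
    partialNorm A (t • z) = |t| * partialNorm A z := by
  simp only [partialNorm, Pi.smul_apply, norm_smul, mul_pow, ← Finset.mul_sum,
    Real.sqrt_mul (sq_nonneg _), Real.sqrt_sq_eq_abs, Real.norm_eq_abs, abs_abs]

lemma continuous_partialNorm (A : Finset ι) : Continuous (partialNorm A) := by
  unfold partialNorm; fun_prop

lemma partialNorm_nonneg (A : Finset ι) (z : ι → ℂ) : 0 ≤ partialNorm A z := Real.sqrt_nonneg _

lemma partialNorm_eq_zero_iff {z : ι → ℂ} : partialNorm A z = 0 ↔ ∀ i ∈ A, z i = 0 := by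
  rw [partialNorm, Real.sqrt_eq_zero (by positivity),
    sum_eq_zero_iff_of_nonneg fun _ _ => by positivity]
  simp

lemma partialNorm_pos_of_mem {G : Set (ι → ℂ)} (hG : DependsOn (· ∈ G) A) (hG0 : 0 ∉ G)
    {z : ι → ℂ} (hz : z ∈ G) : 0 < partialNorm A z :=
  (partialNorm_nonneg A z).lt_of_ne fun h => hG0 <|
    (hG fun i hi => (partialNorm_eq_zero_iff.1 h.symm i hi).trans rfl).mp hz

end PartialNorm

section Laminar

variable {ι κ : Type*} [DecidableEq ι] [Fintype κ]

def IsLaminar (I : κ → Finset ι) : Prop :=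
  ∀ j k, j ≠ k → I j ⊂ I k ∨ I k ⊂ I j ∨ Disjoint (I j) (I k)

def hatI (I : κ → Finset ι) (j : κ) : Finset ι :=
  I j \ (univ.filter fun k => I k ⊂ I j).biUnion I

variable {I : κ → Finset ι}

lemma hatI_subset (j : κ) : hatI I j ⊆ I j := sdiff_subset

lemma mem_hatI {i : ι} {j : κ} : i ∈ hatI I j ↔ i ∈ I j ∧ ∀ k, I k ⊂ I j → i ∉ I k := by
  simp [hatI]

lemma exists_mem_hatI_subset {i : ι} {j' : κ} (hi : i ∈ I j') :
    ∃ j, I j ⊆ I j' ∧ i ∈ hatI I j := by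
  obtain ⟨j, hj, hmin⟩ := exists_min_image (univ.filter fun k => i ∈ I k ∧ I k ⊆ I j')
    (fun k => #(I k)) ⟨j', by simp [hi]⟩
  simp only [mem_filter, mem_univ, true_and] at hj hmin
  refine ⟨j, hj.2, mem_hatI.2 ⟨hj.1, fun k hk hik => ?_⟩⟩
  exact (card_lt_card hk).not_ge (hmin k ⟨hik, hk.subset.trans hj.2⟩)

lemma disjoint_hatI_biUnion (hI : IsLaminar I) (J : Finset κ) {j : κ}
    (hj : ¬ I j ⊆ J.biUnion I) : Disjoint (hatI I j) (J.biUnion I) := by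
  refine disjoint_left.2 fun i hi hiJ => ?_
  obtain ⟨j₀, hj₀, hij₀⟩ := mem_biUnion.1 hiJ
  have hj₀J : I j₀ ⊆ J.biUnion I := subset_biUnion_of_mem I hj₀
  obtain ⟨hij, hmin⟩ := mem_hatI.1 hi
  obtain rfl | hne := eq_or_ne j j₀
  · exact hj hj₀J
  rcases hI j j₀ hne with h | h | h
  · exact hj (h.subset.trans hj₀J)
  · exact hmin j₀ h hij₀
  · exact disjoint_left.1 h hij hij₀

end Laminar

section RelInterior

variable {X Y : Type*} [TopologicalSpace X] [TopologicalSpace Y] {p : X → Prop} {T : Set X}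

/-- The paper's `Int_Z (T ∩ Z)` for `Z = {x | p x}`. -/
def relInterior (p : X → Prop) (T : Set X) : Set X :=
  Subtype.val '' interior {z : {x // p x} | (z : X) ∈ T}

lemma relInterior_subset : relInterior p T ⊆ T ∩ {x | p x} := by
  rintro _ ⟨z, hz, rfl⟩
  exact ⟨interior_subset (s := {z : {x // p x} | (z : X) ∈ T}) hz, z.2⟩

lemma mem_relInterior_of_isOpen {O : Set X} (hO : IsOpen O) {x : X} (hxO : x ∈ O) (hx : p x)
    (hOT : ∀ y ∈ O, p y → y ∈ T) : x ∈ relInterior p T :=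
  ⟨⟨x, hx⟩, mem_interior.2 ⟨Subtype.val ⁻¹' O, fun y hy => hOT y hy y.2,
    hO.preimage continuous_subtype_val, hxO⟩, rfl⟩

lemma eventually_mem_of_mem_relInterior {x : X} (hx : x ∈ relInterior p T) {f : Y → X}
    (hf : Continuous f) (hfp : ∀ y, p (f y)) {y₀ : Y} (hy₀ : f y₀ = x) :
    ∀ᶠ y in 𝓝 y₀, f y ∈ T := by
  obtain ⟨z, hz, rfl⟩ := hx
  have hg : Continuous fun y => (⟨f y, hfp y⟩ : {x // p x}) := hf.subtype_mk hfp
  have hgy₀ : (⟨f y₀, hfp y₀⟩ : {x // p x}) = z := Subtype.ext hy₀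
  exact Eventually.mono (hg.continuousAt.preimage_mem_nhds (hgy₀ ▸ isOpen_interior.mem_nhds hz))
    fun y hy => interior_subset (s := {z : {x // p x} | (z : X) ∈ T}) hy

lemma closure_relInterior_closure {π : X → X} (hp : IsClosed {x | p x}) (hπ : Continuous π)
    (hπp : ∀ x, p x → π x = x) (hπT : Set.MapsTo π T (relInterior p (closure T))) :
    closure (relInterior p (closure T)) = closure T ∩ {x | p x} := by
  refine (closure_minimal relInterior_subset (isClosed_closure.inter hp)).antisymm ?_
  rintro x ⟨hxT, hx⟩
  exact hπp x hx ▸ map_mem_closure hπ hxT hπT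

end RelInterior

section Coordinates

variable {ι : Type*}

lemma Continuous.finset_piecewise {Y X : Type*} [TopologicalSpace Y] [TopologicalSpace X]
    (A : Finset ι) [∀ i, Decidable (i ∈ A)] {f g : Y → ι → X} (hf : Continuous f)
    (hg : Continuous g) : Continuous fun y => A.piecewise (f y) (g y) :=
  continuous_pi fun i => by
    by_cases hi : i ∈ A
    · simp only [piecewise_eq_of_mem _ _ _ hi]; fun_prop
    · simp only [piecewise_eq_of_notMem _ _ _ hi]; fun_prop

lemma DependsOn.mem_closure {α : ι → Type*} [∀ i, TopologicalSpace (α i)] {G : Set (∀ i, α i)}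
    {B : Set ι} (hG : DependsOn (· ∈ G) B) : DependsOn (· ∈ closure G) B := by
  classical
  suffices h : ∀ x y, (∀ i ∈ B, x i = y i) → x ∈ closure G → y ∈ closure G from
    fun x y hxy => propext ⟨h x y hxy, h y x fun i hi => (hxy i hi).symm⟩
  intro x y hxy hx
  have hf : Continuous fun v : ∀ i, α i => B.piecewise v y :=
    continuous_pi fun i => by
      by_cases hi : i ∈ B <;> simp only [Set.piecewise, hi, if_true, if_false] <;> fun_prop
  have hxy' : B.piecewise x y = y := funext fun i => by
    by_cases hi : i ∈ B <;> simp [Set.piecewise, hi, hxy i]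
  exact hxy' ▸ map_mem_closure (f := fun v => B.piecewise v y) hf hx fun v hv =>
    (hG fun i hi => (Set.piecewise_eq_of_mem _ _ _ hi).symm).mp hv

lemma not_eventually_add_single_mem_closure [DecidableEq ι] {B : Finset ι} {G : Set (ι → ℂ)}
    (hG : DependsOn (· ∈ G) B)
    (hGproper : ∀ z, z ∈ closure G → -z ∈ closure G → ∀ i ∈ B, z i = 0)
    {z : ι → ℂ} (hz : ∀ i ∈ B, z i = 0) {i₀ : ι} (hi₀ : i₀ ∈ B) :
    ¬ ∀ᶠ c in 𝓝 (0 : ℂ), z + Pi.single i₀ c ∈ closure G := by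
  intro h
  have hneg : ∀ᶠ c in 𝓝 (0 : ℂ), z + Pi.single i₀ (-c) ∈ closure G :=
    (by simpa using tendsto_neg (0 : ℂ) : Tendsto Neg.neg (𝓝 (0 : ℂ)) (𝓝 0)).eventually h
  obtain ⟨c, ⟨hc, hc'⟩, hc₀⟩ :=
    (((h.and hneg).filter_mono nhdsWithin_le_nhds).and (self_mem_nhdsWithin (s := {0}ᶜ))).exists
  have hsingle : ∀ c, Pi.single i₀ c ∈ closure G ↔ z + Pi.single i₀ c ∈ closure G := fun c =>
    Iff.of_eq <| hG.mem_closure fun i hi => by simp [hz i hi]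
  have hc_neg : -Pi.single i₀ c ∈ closure G :=
    Pi.single_neg (f := fun _ => ℂ) i₀ c ▸ (hsingle (-c)).2 hc'
  exact hc₀ (by simpa using hGproper _ ((hsingle c).2 hc) hc_neg i₀ hi₀)

lemma piecewise_biUnion_mem [DecidableEq ι] {κ : Type*} {I : κ → Finset ι} {W : Set (ι → ℂ)}
    (hWdep : DependsOn (· ∈ W) {i | ∀ j, i ∉ I j}) (J : Finset κ) (v : ι → ℂ) {w : ι → ℂ}
    (hw : w ∈ W) : (J.biUnion I).piecewise v w ∈ W :=
  (hWdep fun _ hi => piecewise_eq_of_notMem _ _ _ fun hiJ =>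
    (mem_biUnion.1 hiJ).elim fun j h => hi j h.2).mpr hw

end Coordinates

section MultiCone

variable {ι κ : Type*} [DecidableEq ι] [Fintype κ] {I : κ → Finset ι}
  {G : κ → Set (ι → ℂ)} {R : κ → ℝ} {W : Set (ι → ℂ)} {ε : ℝ}

variable (I G R W ε) in
/-- The multi-cone `S(U, {G_j}, ε)` with `U = {z ∈ W | ∀ j, ‖z‖_{Î_j} < R j}`, where
`Î_j = hatI I j` and `‖z‖_A = partialNorm A z`. -/
def multiCone : Set (ι → ℂ) :=
  {z | z ∈ W ∧ ∀ j, partialNorm (hatI I j) z < R j ∧ z ∈ G j ∧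
    ∀ β, I β ⊂ I j → partialNorm (hatI I β) z < ε * partialNorm (hatI I j) z}

lemma multiCone_subset (j : κ) : multiCone I G R W ε ⊆ G j := fun _ hz => (hz.2 j).2.1

variable (I G R W ε) in
/-- The conditions of `multiCone I G R W ε` that only involve coordinates off `J.biUnion I`. -/
def multiConeOff (J : Finset κ) : Set (ι → ℂ) :=
  {u | u ∈ W ∧ ∀ j, ¬ I j ⊆ J.biUnion I → partialNorm (hatI I j) u < R j ∧ u ∈ G j ∧
    ∀ β, I β ⊂ I j → ¬ I β ⊆ J.biUnion I →
      partialNorm (hatI I β) u < ε * partialNorm (hatI I j) u}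

lemma isOpen_multiConeOff (hGopen : ∀ j, IsOpen (G j)) (hWopen : IsOpen W) (J : Finset κ) :
    IsOpen (multiConeOff I G R W ε J) := by
  simp only [multiConeOff, Set.ofPred_and, Set.ofPred_forall, Set.ofPred_mem_eq]
  refine hWopen.inter (isOpen_iInter_of_finite fun j => isOpen_iInter_of_finite fun _ => ?_)
  refine ((continuous_partialNorm _).isOpen_preimage _ isOpen_Iio).inter ((hGopen j).inter ?_)
  exact isOpen_iInter_of_finite fun β => isOpen_iInter_of_finite fun _ =>
    isOpen_iInter_of_finite fun _ =>
      isOpen_lt (continuous_partialNorm _) (continuous_const.mul (continuous_partialNorm _))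

theorem exists_ne_zero_of_mem_relInterior_multiCone
    (hGdep : ∀ j, DependsOn (· ∈ G j) (hatI I j : Set ι))
    (hGproper : ∀ j, ∀ z, z ∈ closure (G j) → -z ∈ closure (G j) → ∀ i ∈ hatI I j, z i = 0)
    {J : Finset κ} {z : ι → ℂ}
    (hz : z ∈ relInterior (fun x => ∀ i ∈ J.biUnion I, x i = 0) (closure (multiCone I G R W ε)))
    {i₀ : ι} {j' : κ} (hi₀ : i₀ ∈ I j') (hi₀J : i₀ ∉ J.biUnion I) : ∃ i ∈ I j', z i ≠ 0 := by
  by_contra! hzj'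
  obtain ⟨j, hjj', hi₀j⟩ := exists_mem_hatI_subset hi₀
  refine not_eventually_add_single_mem_closure (hGdep j) (hGproper j)
    (fun i hi => hzj' i (hjj' (hatI_subset j hi))) hi₀j ?_
  refine (eventually_mem_of_mem_relInterior hz
    (continuous_const.add (continuous_single i₀)) (fun c i hi => ?_) (by simp)).mono
    fun c hc => closure_mono (multiCone_subset j) hc
  simp [ne_of_mem_of_not_mem hi hi₀J, (relInterior_subset hz).2 i hi]

variable (hI : IsLaminar I) (hGdep : ∀ j, DependsOn (· ∈ G j) (hatI I j : Set ι))
  (hWdep : DependsOn (· ∈ W) {i | ∀ j, i ∉ I j})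
include hI hGdep hWdep

lemma piecewise_mem_multiConeOff {w : ι → ℂ} (hw : w ∈ multiCone I G R W ε) (v : ι → ℂ)
    (J : Finset κ) : (J.biUnion I).piecewise v w ∈ multiConeOff I G R W ε J := by
  have hoff : ∀ j, ¬ I j ⊆ J.biUnion I →
      ∀ i ∈ hatI I j, (J.biUnion I).piecewise v w i = w i := fun j hj i hi =>
    piecewise_eq_of_notMem _ _ _ (disjoint_left.1 (disjoint_hatI_biUnion hI J hj) hi)
  refine ⟨piecewise_biUnion_mem hWdep J v hw.1, fun j hj => ?_⟩
  obtain ⟨hR, hG, hratio⟩ := hw.2 j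
  refine ⟨partialNorm_dependsOn _ (hoff j hj) ▸ hR, (hGdep j (hoff j hj)).mpr hG,
    fun β hβ hβJ => ?_⟩
  rw [partialNorm_dependsOn _ (hoff j hj), partialNorm_dependsOn _ (hoff β hβJ)]
  exact hratio β hβ

lemma piecewise_smul_mem_multiCone (hGcone : ∀ j, ∀ z ∈ G j, ∀ c : ℝ, 0 < c → c • z ∈ G j)
    {J : Finset κ} {w u : ι → ℂ} (hw : w ∈ multiCone I G R W ε)
    (hu : u ∈ multiConeOff I G R W ε J) {t : ℝ} (ht₀ : 0 < t) (ht₁ : t ≤ 1)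
    (hsmall : ∀ j, ¬ I j ⊆ J.biUnion I →
      ∀ β, t * partialNorm (hatI I β) w < ε * partialNorm (hatI I j) u) :
    (J.biUnion I).piecewise (t • w) u ∈ multiCone I G R W ε := by
  set m := (J.biUnion I).piecewise (t • w) u
  have hin : ∀ j, I j ⊆ J.biUnion I → ∀ i ∈ hatI I j, m i = (t • w) i := fun j hj i hi =>
    piecewise_eq_of_mem _ _ _ (hj (hatI_subset j hi))
  have hoff : ∀ j, ¬ I j ⊆ J.biUnion I → ∀ i ∈ hatI I j, m i = u i := fun j hj i hi =>
    piecewise_eq_of_notMem _ _ _ (disjoint_left.1 (disjoint_hatI_biUnion hI J hj) hi)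
  have hnorm_in : ∀ j, I j ⊆ J.biUnion I →
      partialNorm (hatI I j) m = t * partialNorm (hatI I j) w := fun j hj => by
    rw [partialNorm_dependsOn _ (hin j hj), partialNorm_smul, abs_of_pos ht₀]
  have hnorm_off : ∀ j, ¬ I j ⊆ J.biUnion I →
      partialNorm (hatI I j) m = partialNorm (hatI I j) u := fun j hj =>
    partialNorm_dependsOn _ (hoff j hj)
  refine ⟨piecewise_biUnion_mem hWdep J (t • w) hu.1, fun j => ?_⟩
  by_cases hj : I j ⊆ J.biUnion I
  · obtain ⟨hR, hG, hratio⟩ := hw.2 j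
    refine ⟨?_, (hGdep j (hin j hj)).mpr (hGcone j w hG t ht₀), fun β hβ => ?_⟩
    · rw [hnorm_in j hj]
      exact (mul_le_of_le_one_left (partialNorm_nonneg _ _) ht₁).trans_lt hR
    · rw [hnorm_in j hj, hnorm_in β (hβ.subset.trans hj), mul_left_comm]
      exact mul_lt_mul_of_pos_left (hratio β hβ) ht₀
  · obtain ⟨hR, hG, hratio⟩ := hu.2 j hj
    refine ⟨hnorm_off j hj ▸ hR, (hGdep j (hoff j hj)).mpr hG, fun β hβ => ?_⟩
    rw [hnorm_off j hj]
    by_cases hβJ : I β ⊆ J.biUnion I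
    · rw [hnorm_in β hβJ]
      exact hsmall j hj β
    · rw [hnorm_off β hβJ]
      exact hratio β hβ hβJ

lemma mem_closure_multiCone_of_mem_multiConeOff
    (hGcone : ∀ j, ∀ z ∈ G j, ∀ c : ℝ, 0 < c → c • z ∈ G j) (hG0 : ∀ j, (0 : ι → ℂ) ∉ G j)
    (hε : 0 < ε) {J : Finset κ} {w u : ι → ℂ} (hw : w ∈ multiCone I G R W ε)
    (hu : u ∈ multiConeOff I G R W ε J) (huJ : ∀ i ∈ J.biUnion I, u i = 0) :
    u ∈ closure (multiCone I G R W ε) := by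
  have hlim : Tendsto (fun t : ℝ => (J.biUnion I).piecewise (t • w) u) (𝓝[>] 0) (𝓝 u) := by
    have hu₀ : (J.biUnion I).piecewise ((0 : ℝ) • w) u = u := by
      ext i; by_cases hi : i ∈ J.biUnion I <;> simp [hi, huJ]
    have hcont : Continuous fun t : ℝ => (J.biUnion I).piecewise (t • w) u :=
      Continuous.finset_piecewise _ (by fun_prop) continuous_const
    simpa only [hu₀] using (hcont.tendsto 0).mono_left nhdsWithin_le_nhds
  -- the mixed conditions `‖·‖_{Î_β} < ε ‖·‖_{Î_j}` with `Î_β` in and `Î_j` off `J.biUnion I`: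
  -- the left side shrinks with `t`, the right side is positive because `u ∈ G j`
  have hsmall : ∀ᶠ t in 𝓝 (0 : ℝ), ∀ j, ¬ I j ⊆ J.biUnion I →
      ∀ β, t * partialNorm (hatI I β) w < ε * partialNorm (hatI I j) u := by
    refine eventually_all.2 fun j => eventually_imp_distrib_left.2 fun hj =>
      eventually_all.2 fun β => ?_
    have hpos : 0 < ε * partialNorm (hatI I j) u :=
      mul_pos hε (partialNorm_pos_of_mem (hGdep j) (hG0 j) (hu.2 j hj).2.1)
    exact Tendsto.eventually_lt_const hpos
      (by simpa using (continuous_mul_const (partialNorm (hatI I β) w)).tendsto 0)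
  refine mem_closure_of_tendsto hlim ?_
  filter_upwards [self_mem_nhdsWithin, nhdsWithin_le_nhds (Iic_mem_nhds one_pos),
    nhdsWithin_le_nhds hsmall] with t ht₀ ht₁ ht
  exact piecewise_smul_mem_multiCone hI hGdep hWdep hGcone hw hu ht₀ ht₁ ht

lemma piecewise_zero_mem_relInterior (hGopen : ∀ j, IsOpen (G j))
    (hGcone : ∀ j, ∀ z ∈ G j, ∀ c : ℝ, 0 < c → c • z ∈ G j) (hG0 : ∀ j, (0 : ι → ℂ) ∉ G j)
    (hWopen : IsOpen W) (hε : 0 < ε) (J : Finset κ) {w : ι → ℂ}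
    (hw : w ∈ multiCone I G R W ε) :
    (J.biUnion I).piecewise (0 : ι → ℂ) w ∈
      relInterior (fun z => ∀ i ∈ J.biUnion I, z i = 0) (closure (multiCone I G R W ε)) :=
  mem_relInterior_of_isOpen (isOpen_multiConeOff hGopen hWopen J)
    (piecewise_mem_multiConeOff hI hGdep hWdep hw 0 J)
    (fun _ hi => piecewise_eq_of_mem _ _ _ hi) fun _ hu huJ =>
    mem_closure_multiCone_of_mem_multiConeOff hI hGdep hWdep hGcone hG0 hε hw hu huJ

theorem closure_relInterior_closure_multiCone (hGopen : ∀ j, IsOpen (G j))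
    (hGcone : ∀ j, ∀ z ∈ G j, ∀ c : ℝ, 0 < c → c • z ∈ G j) (hG0 : ∀ j, (0 : ι → ℂ) ∉ G j)
    (hWopen : IsOpen W) (hε : 0 < ε) (J : Finset κ) :
    closure (relInterior (fun z => ∀ i ∈ J.biUnion I, z i = 0) (closure (multiCone I G R W ε))) =
      closure (multiCone I G R W ε) ∩ {z | ∀ i ∈ J.biUnion I, z i = 0} := by
  refine closure_relInterior_closure ?_
    (Continuous.finset_piecewise (f := fun _ => 0) _ continuous_const continuous_id)
    (fun z hz => ?_) fun w hw =>
    piecewise_zero_mem_relInterior hI hGdep hWdep hGopen hGcone hG0 hWopen hε J hw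
  · simp only [Set.ofPred_forall]
    exact isClosed_biInter fun i _ => isClosed_eq (continuous_apply i) continuous_const
  · ext i; by_cases hi : i ∈ J.biUnion I <;> simp [hi, hz]

end MultiCone

theorem stmt_9_general
    (n ℓ : ℕ) (I : Fin ℓ → Finset (Fin n))
    (h1 : ∀ j k, j ≠ k → I j ⊂ I k ∨ I k ⊂ I j ∨ Disjoint (I j) (I k))
    (Ihat : Fin ℓ → Finset (Fin n))
    (hIhat : ∀ j, Ihat j = I j \ (Finset.univ.filter (fun k => I k ⊂ I j)).biUnion I)
    (nrm : Finset (Fin n) → (Fin n → ℂ) → ℝ)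
    (hnrm : ∀ A z, nrm A z = Real.sqrt (∑ i ∈ A, ‖z i‖ ^ 2))
    (G : Fin ℓ → Set (Fin n → ℂ))
    (hGopen : ∀ j, IsOpen (G j))
    (hGcone : ∀ j, ∀ z ∈ G j, ∀ c : ℝ, 0 < c → c • z ∈ G j)
    (hG0 : ∀ j, (0 : Fin n → ℂ) ∉ G j)
    (hGdep : ∀ j, ∀ z w : Fin n → ℂ, (∀ i ∈ Ihat j, z i = w i) → (z ∈ G j ↔ w ∈ G j))
    (hGproper : ∀ j, ∀ z, z ∈ closure (G j) → -z ∈ closure (G j) → ∀ i ∈ Ihat j, z i = 0)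
    (R : Fin ℓ → ℝ)
    (W : Set (Fin n → ℂ)) (hWopen : IsOpen W)
    (hWdep : ∀ z w : Fin n → ℂ, (∀ i, (∀ j, i ∉ I j) → z i = w i) → (z ∈ W ↔ w ∈ W))
    (U : Set (Fin n → ℂ))
    (hU : U = {z | (∀ j, nrm (Ihat j) z < R j) ∧ z ∈ W})
    (ε : ℝ) (hε : 0 < ε)
    (V : Fin ℓ → Set (Fin n → ℂ))
    (hV : ∀ j, V j = {z ∈ U | z ∈ G j ∧ ∀ β, I β ⊂ I j → nrm (Ihat β) z < ε * nrm (Ihat j) z})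
    (S : Set (Fin n → ℂ)) (hS : S = ⋂ j, V j)
    (J : Finset (Fin ℓ)) (hJne : J.Nonempty)
    (SJ : Set (Fin n → ℂ))
    (hSJ : SJ = Subtype.val ''
      interior {z : {w : Fin n → ℂ // ∀ i ∈ J.biUnion I, w i = 0} | (z : Fin n → ℂ) ∈ closure S})
    : closure SJ = closure S ∩ {z | ∀ i ∈ J.biUnion I, z i = 0} ∧
      ∀ J' : Finset (Fin ℓ), J'.Nonempty →
        ¬ ({z : Fin n → ℂ | ∀ i ∈ J.biUnion I, z i = 0} ⊆
            {z : Fin n → ℂ | ∀ i ∈ J'.biUnion I, z i = 0}) →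
        {z : Fin n → ℂ | ∀ i ∈ J'.biUnion I, z i = 0} ∩ SJ = ∅ := by
  obtain rfl : nrm = partialNorm := funext fun A => funext (hnrm A)
  obtain rfl : Ihat = hatI I := funext hIhat
  obtain rfl : S = multiCone I G R W ε := by
    obtain ⟨j₀, -⟩ := hJne
    ext z
    simp only [hS, hV, hU, Set.mem_iInter, Set.mem_ofPred_eq, multiCone]
    exact ⟨fun h => ⟨(h j₀).1.2, fun j => ⟨(h j).1.1 j, (h j).2⟩⟩,
      fun h j => ⟨⟨fun k => (h.2 k).1, h.1⟩, (h.2 j).2⟩⟩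
  have hGdep' : ∀ j, DependsOn (· ∈ G j) (hatI I j : Set (Fin n)) := fun j _ _ h =>
    propext (hGdep j _ _ h)
  have hWdep' : DependsOn (· ∈ W) {i | ∀ j, i ∉ I j} := fun _ _ h => propext (hWdep _ _ h)
  subst hSJ
  refine ⟨closure_relInterior_closure_multiCone h1 hGdep' hWdep' hGopen hGcone hG0 hWopen hε J,
    fun J' _ hJJ' => ?_⟩
  obtain ⟨i₀, hi₀J', hi₀J⟩ : ∃ i₀ ∈ J'.biUnion I, i₀ ∉ J.biUnion I := by
    by_contra! h
    exact hJJ' fun z hz i hi => hz i (h i hi)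
  obtain ⟨j', hj', hi₀⟩ := mem_biUnion.1 hi₀J'
  refine Set.eq_empty_of_forall_notMem fun z ⟨hzJ', hz⟩ => ?_
  obtain ⟨i, hi, hzi⟩ := exists_ne_zero_of_mem_relInterior_multiCone hGdep' hGproper hz hi₀ hi₀J
  exact hzi (hzJ' i (mem_biUnion.2 ⟨j', hj', hi⟩))

/-- Lemma 7.1, 2.: `closure S_J = closure S ∩ Z_J`, and for any nonempty
`J′` with `Z_J ⊄ Z_{J′}` one has `Z_{J′} ∩ S_J = ∅`. -/
theorem stmt_9
    (n ℓ : ℕ) (I : Fin ℓ → Finset (Fin n))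
    (h1 : ∀ j k, j ≠ k → I j ⊂ I k ∨ I k ⊂ I j ∨ Disjoint (I j) (I k))
    (h2 : ∀ j, (Finset.univ.filter (fun k => I k ⊂ I j)).biUnion I ⊂ I j)
    (Ihat : Fin ℓ → Finset (Fin n))
    (hIhat : ∀ j, Ihat j = I j \ (Finset.univ.filter (fun k => I k ⊂ I j)).biUnion I)
    (nrm : Finset (Fin n) → (Fin n → ℂ) → ℝ)
    (hnrm : ∀ A z, nrm A z = Real.sqrt (∑ i ∈ A, ‖z i‖ ^ 2))
    (G : Fin ℓ → Set (Fin n → ℂ))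
    (hGopen : ∀ j, IsOpen (G j))
    (hGconv : ∀ j, Convex ℝ (G j))
    (hGcone : ∀ j, ∀ z ∈ G j, ∀ c : ℝ, 0 < c → c • z ∈ G j)
    (hGne : ∀ j, (G j).Nonempty)
    (hG0 : ∀ j, (0 : Fin n → ℂ) ∉ G j)
    (hGdep : ∀ j, ∀ z w : Fin n → ℂ, (∀ i ∈ Ihat j, z i = w i) → (z ∈ G j ↔ w ∈ G j))
    (hGproper : ∀ j, ∀ z, z ∈ closure (G j) → -z ∈ closure (G j) → ∀ i ∈ Ihat j, z i = 0)
    (R : Fin ℓ → ℝ) (hR : ∀ j, 0 < R j)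
    (W : Set (Fin n → ℂ)) (hWconv : Convex ℝ W) (hWopen : IsOpen W) (hWne : W.Nonempty)
    (hWdep : ∀ z w : Fin n → ℂ, (∀ i, (∀ j, i ∉ I j) → z i = w i) → (z ∈ W ↔ w ∈ W))
    (U : Set (Fin n → ℂ))
    (hU : U = {z | (∀ j, nrm (Ihat j) z < R j) ∧ z ∈ W})
    (ε : ℝ) (hε : 0 < ε)
    (V : Fin ℓ → Set (Fin n → ℂ))
    (hV : ∀ j, V j = {z ∈ U | z ∈ G j ∧ ∀ β, I β ⊂ I j → nrm (Ihat β) z < ε * nrm (Ihat j) z})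
    (S : Set (Fin n → ℂ)) (hS : S = ⋂ j, V j)
    (J : Finset (Fin ℓ)) (hJne : J.Nonempty)
    (SJ : Set (Fin n → ℂ))
    (hSJ : SJ = Subtype.val ''
      interior {z : {w : Fin n → ℂ // ∀ i ∈ J.biUnion I, w i = 0} | (z : Fin n → ℂ) ∈ closure S})
    : closure SJ = closure S ∩ {z | ∀ i ∈ J.biUnion I, z i = 0} ∧
      ∀ J' : Finset (Fin ℓ), J'.Nonempty →
        ¬ ({z : Fin n → ℂ | ∀ i ∈ J.biUnion I, z i = 0} ⊆
            {z : Fin n → ℂ | ∀ i ∈ J'.biUnion I, z i = 0}) →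
        {z : Fin n → ℂ | ∀ i ∈ J'.biUnion I, z i = 0} ∩ SJ = ∅ :=
  stmt_9_general n ℓ I h1 Ihat hIhat nrm hnrm G hGopen hGcone hG0 hGdep hGproper R W hWopen hWdep U
    hU ε hε V hV S hS J hJne SJ hSJ
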